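/- arXiv:1304.3199 — 3 statements merged into one kernel-verified Lean document; each statement's English description precedes it below -/
import Mathlib

section
/- Let q ≥ 1 be a positive integer, K : ℤ → ℂ a q-periodic function, and V : ℝ → ℂ a smooth compactly supported function. Then Σ_{n ≥ 1} K(n) V(n) = q^{-1/2} Σ_{m ∈ ℤ} K̂(m) V̂(m/q), where K̂ is the normalized discrete Fourier transform mod q and V̂(ξ) = ∫_ℝ V(t) e(−tξ) dt. (It is assumed the support of V lies in (0, ∞), or equivalently the left sum may range over all of ℤ.) -/
open Finset

noncomputable def e (z : ℂ) : ℂ := Complex.exp (2 * Real.pi * Complex.I * z)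

noncomputable def dft (q : ℕ) (K : ℤ → ℂ) (n : ℤ) : ℂ :=
  (1 / Real.sqrt q) * ∑ h ∈ Finset.range q, K h * e ((h * n : ℤ) / (q : ℂ))

/-- Continuous Fourier transform `V̂(ξ) = ∫ V(t) e(−tξ) dt`. -/
noncomputable def ftR (V : ℝ → ℂ) (ξ : ℝ) : ℂ := ∫ t : ℝ, V t * e (-(t * ξ))

open MeasureTheory Real FourierTransform in
/-- A smooth compactly supported function as a Schwartz map. -/
noncomputable def toSchwartz (f : ℝ → ℂ) (hf : ContDiff ℝ (⊤ : ℕ∞) f) (hc : HasCompactSupport f) :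
    SchwartzMap ℝ ℂ where
  toFun := f
  smooth' := hf.of_le (by simp)
  decay' := by
    intro k n
    have hcont : Continuous fun x : ℝ => ‖x‖ ^ k * ‖iteratedFDeriv ℝ n f x‖ :=
      (continuous_norm.pow k).mul (hf.continuous_iteratedFDeriv (by exact_mod_cast le_top)).norm
    have hsupp : HasCompactSupport fun x : ℝ => ‖x‖ ^ k * ‖iteratedFDeriv ℝ n f x‖ :=
      ((hc.iteratedFDeriv n).norm).mul_left
    obtain ⟨C, hC⟩ := hcont.bounded_above_of_compact_support hsupp
    exact ⟨C, fun x => (Real.le_norm_self _).trans (hC x)⟩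

open MeasureTheory Real FourierTransform in
lemma poisson (W : ℝ → ℂ) (h1 : ContDiff ℝ (⊤ : ℕ∞) W) (h2 : HasCompactSupport W) :
    ∑' n : ℤ, W n = ∑' m : ℤ, 𝓕 W m := by
  have := (toSchwartz W h1 h2).tsum_eq_tsum_fourier 0
  simp [toSchwartz, SchwartzMap.fourierTransformCLM_apply, SchwartzMap.fourier_coe] at this
  exact this

open MeasureTheory Real FourierTransform in
lemma summable_ft (W : ℝ → ℂ) (h1 : ContDiff ℝ (⊤ : ℕ∞) W) (h2 : HasCompactSupport W) :
    Summable fun m : ℤ => 𝓕 W m := by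
  have hO := (SchwartzMap.fourierTransformCLM ℝ (toSchwartz W h1 h2)).isBigO_cocompact_rpow (-2)
  have : (fun m : ℤ => 𝓕 W m) =
      fun m : ℤ => (SchwartzMap.fourierTransformCLM ℝ (toSchwartz W h1 h2)) m := rfl
  rw [this]
  exact summable_of_isBigO (Real.summable_abs_int_rpow one_lt_two)
    (hO.comp_tendsto Int.tendsto_coe_cofinite)

open MeasureTheory Real FourierTransform in
lemma ft_scale (V : ℝ → ℂ) (h Q : ℝ) (hQ : 0 < Q) (m : ℝ) :
    𝓕 (fun t => V (h + t * Q)) m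
      = (1 / (Q : ℂ)) * e ((h * m / Q : ℝ) : ℂ) * ftR V (m / Q) := by
  rw [Real.fourier_real_eq_integral_exp_smul]
  simp only [smul_eq_mul]
  have key : (fun t : ℝ => Complex.exp (↑(-2 * π * t * m) * Complex.I) * V (h + t * Q))
      = fun t : ℝ =>
        (fun u : ℝ => Complex.exp (↑(-2 * π * (u / Q) * m) * Complex.I) * V (h + u)) (t * Q) := by
    funext t
    have : t * Q / Q = t := by field_simp
    simp only [this]
  rw [key, MeasureTheory.Measure.integral_comp_mul_right
      (fun u : ℝ => Complex.exp (↑(-2 * π * (u / Q) * m) * Complex.I) * V (h + u)) Q]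
  have key2 : (fun u : ℝ => Complex.exp (↑(-2 * π * (u / Q) * m) * Complex.I) * V (h + u))
      = fun u : ℝ =>
        (fun v : ℝ => Complex.exp (↑(-2 * π * ((v - h) / Q) * m) * Complex.I) * V v) (h + u) := by
    funext u
    have : h + u - h = u := by ring
    simp only [this]
  rw [key2, MeasureTheory.integral_add_left_eq_self
      (fun v : ℝ => Complex.exp (↑(-2 * π * ((v - h) / Q) * m) * Complex.I) * V v) h]
  have key3 : (fun v : ℝ => Complex.exp (↑(-2 * π * ((v - h) / Q) * m) * Complex.I) * V v)
      = fun v : ℝ => e ((h * m / Q : ℝ) : ℂ) * (V v * e (-(v * (m / Q)))) := by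
    funext v
    unfold e
    rw [mul_comm (V v) (Complex.exp _), ← mul_assoc, ← Complex.exp_add]
    congr 1
    push_cast
    field_simp
    ring
  rw [key3, MeasureTheory.integral_const_mul]
  rw [abs_of_pos (inv_pos.mpr hQ), Complex.real_smul, ftR]
  push_cast
  ring

open MeasureTheory Real FourierTransform in
theorem stmt5 (q : ℕ) (hq : 1 ≤ q) (K : ℤ → ℂ)
    (hK : ∀ n : ℤ, K (n + q) = K n)
    (V : ℝ → ℂ) (hV : ContDiff ℝ (⊤ : ℕ∞) V) (hVc : HasCompactSupport V)
    (hVpos : Function.support V ⊆ Set.Ioi (0 : ℝ)) :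
    ∑' n : ℤ, K n * V n
      = (1 / Real.sqrt q) * ∑' m : ℤ, dft q K m * ftR V ((m : ℝ) / q) := by
  have hqz : NeZero q := ⟨by omega⟩
  set Q : ℝ := (q : ℝ) with hQdef
  have hQ : 0 < Q := by positivity
  set f : ℤ → ℂ := fun n => K n * V n with hfdef
  -- f has finite support, hence is summable
  obtain ⟨r, hr⟩ := hVc.isBounded.subset_closedBall 0
  have hfin : (Function.support f).Finite := by
    apply Set.Finite.subset (Set.finite_Icc (-⌈r⌉ : ℤ) ⌈r⌉)
    intro n hn
    have hVn : V n ≠ 0 := by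
      intro h0
      apply hn
      simp [hfdef, h0]
    have hmem : (n : ℝ) ∈ Metric.closedBall 0 r :=
      hr (subset_closure (Function.mem_support.2 hVn))
    rw [Metric.mem_closedBall, Real.dist_eq, sub_zero] at hmem
    have h1 : ((|n| : ℤ) : ℝ) ≤ ((⌈r⌉ : ℤ) : ℝ) := by
      push_cast
      calc (|n| : ℝ) = |(n : ℝ)| := by push_cast; rfl
        _ ≤ r := hmem
        _ ≤ ⌈r⌉ := Int.le_ceil r
    have h2 : |n| ≤ ⌈r⌉ := by exact_mod_cast h1
    rw [Set.mem_Icc]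
    rw [abs_le] at h2
    exact ⟨h2.1, h2.2⟩
  have hfs : Summable f := summable_of_finite_support hfin
  -- reindex the sum over ℤ by (Fin q) × ℤ
  set E : Fin q × ℤ ≃ ℤ := (Equiv.prodComm (Fin q) ℤ).trans (Int.divModEquiv q).symm with hEdef
  have hEapp : ∀ p : Fin q × ℤ, E p = p.2 * q + (p.1 : ℤ) := by
    intro p
    simp [hEdef, Int.divModEquiv]
  have hgs : Summable (f ∘ E) := E.summable_iff.2 hfs
  have hgs' : Summable (fun p : Fin q × ℤ => f (p.2 * q + (p.1 : ℤ))) :=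
    hgs.congr fun p => by rw [Function.comp_apply, hEapp]
  have step1 : ∑' n : ℤ, f n = ∑ h : Fin q, ∑' k : ℤ, f (k * q + (h : ℤ)) := by
    calc ∑' n : ℤ, f n = ∑' p : Fin q × ℤ, f (E p) := (E.tsum_eq f).symm
      _ = ∑' p : Fin q × ℤ, f (p.2 * q + (p.1 : ℤ)) := tsum_congr fun p => by rw [hEapp]
      _ = ∑ h : Fin q, ∑' k : ℤ, f (k * q + (h : ℤ)) := by
          rw [hgs'.tsum_prod, tsum_fintype]
  -- the periodicity of K
  have hKp : Function.Periodic K (q : ℤ) := hK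
  have hper : ∀ (k : ℤ) (h : Fin q), K (k * q + (h : ℤ)) = K (h : ℤ) := by
    intro k h
    have := (hKp.int_mul k) ((h : ℤ))
    rwa [add_comm] at this
  -- the shifted-rescaled functions
  set W : Fin q → ℝ → ℂ := fun h => fun t => V (((h : ℕ) : ℝ) + t * Q) with hWdef
  have hWsmooth : ∀ h : Fin q, ContDiff ℝ (⊤ : ℕ∞) (W h) :=
    fun h => hV.comp ((contDiff_const).add ((contDiff_id).mul contDiff_const))
  have hWsupp : ∀ h : Fin q, HasCompactSupport (W h) := by
    intro h
    have : W h = V ∘ ((Homeomorph.mulRight₀ Q hQ.ne').trans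
        (Homeomorph.addLeft (((h : ℕ) : ℝ)))) := rfl
    rw [this]
    exact hVc.comp_homeomorph _
  have step2 : ∀ h : Fin q, ∑' k : ℤ, f (k * q + (h : ℤ)) = ∑' m : ℤ, K (h : ℤ) * 𝓕 (W h) m := by
    intro h
    have : ∀ k : ℤ, f (k * q + (h : ℤ)) = K (h : ℤ) * W h k := by
      intro k
      have hcast : (((k * q + (h : ℤ)) : ℤ) : ℝ) = ((h : ℕ) : ℝ) + (k : ℝ) * Q := by
        push_cast
        ring
      simp only [hfdef, hper k h, hcast, hWdef]
    rw [tsum_congr this, tsum_mul_left, poisson (W h) (hWsmooth h) (hWsupp h), ← tsum_mul_left]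
  have step3 : ∑ h : Fin q, ∑' m : ℤ, K (h : ℤ) * 𝓕 (W h) m
      = ∑' m : ℤ, ∑ h : Fin q, K (h : ℤ) * 𝓕 (W h) m := by
    exact (Summable.tsum_finsetSum fun h _ => (summable_ft (W h) (hWsmooth h) (hWsupp h)).mul_left _).symm
  have key : ∀ m : ℤ, ∑ h : Fin q, K (h : ℤ) * 𝓕 (W h) m
      = (1 / (Real.sqrt q : ℂ)) * (dft q K m * ftR V ((m : ℝ) / q)) := by
    intro m
    have hstep : ∀ h : Fin q, K (h : ℤ) * 𝓕 (W h) m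
        = (1 / (q : ℂ)) * (K (h : ℤ) * e ((((h : ℤ) * m : ℤ) : ℂ) / (q : ℂ)))
          * ftR V ((m : ℝ) / Q) := by
      intro h
      have := ft_scale V (((h : ℕ) : ℝ)) Q hQ (m : ℝ)
      rw [hWdef]
      rw [this]
      have hc : ((((h : ℕ) : ℝ) * (m : ℝ) / Q : ℝ) : ℂ) = (((h : ℤ) * m : ℤ) : ℂ) / (q : ℂ) := by
        rw [hQdef]
        push_cast
        ring
      rw [hc, hQdef]
      push_cast
      ring
    rw [Finset.sum_congr rfl fun h _ => hstep h]
    rw [← Finset.sum_mul, ← Finset.mul_sum]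
    rw [dft]
    have hsq : (1 / (Real.sqrt q : ℂ)) * ((1 / (Real.sqrt q : ℂ))) = 1 / (q : ℂ) := by
      rw [div_mul_div_comm, one_mul, ← Complex.ofReal_mul,
        Real.mul_self_sqrt (by positivity : (0:ℝ) ≤ (q:ℝ))]
      norm_num
    have hrange : ∑ h : Fin q, K (h : ℤ) * e ((((h : ℤ) * m : ℤ) : ℂ) / (q : ℂ))
        = ∑ h ∈ Finset.range q, K h * e (((h * m : ℤ) : ℂ) / (q : ℂ)) := by
      rw [← Fin.sum_univ_eq_sum_range (fun h : ℕ => K h * e (((h * m : ℤ) : ℂ) / (q : ℂ))) q]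
    rw [hrange]
    rw [mul_assoc (1 / (Real.sqrt q : ℂ))]
    rw [← mul_assoc (1 / (Real.sqrt q : ℂ)) (1 / (Real.sqrt q : ℂ)), hsq]
    rw [hQdef, mul_assoc]
  calc ∑' n : ℤ, K n * V n = ∑' n : ℤ, f n := rfl
    _ = ∑ h : Fin q, ∑' k : ℤ, f (k * q + (h : ℤ)) := step1
    _ = ∑ h : Fin q, ∑' m : ℤ, K (h : ℤ) * 𝓕 (W h) m := Finset.sum_congr rfl fun h _ => step2 h
    _ = ∑' m : ℤ, ∑ h : Fin q, K (h : ℤ) * 𝓕 (W h) m := step3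
    _ = ∑' m : ℤ, (1 / (Real.sqrt q : ℂ)) * (dft q K m * ftR V ((m : ℝ) / q)) :=
        tsum_congr key
    _ = (1 / Real.sqrt q) * ∑' m : ℤ, dft q K m * ftR V ((m : ℝ) / q) := by
        rw [tsum_mul_left]
end

section
/- Let q ≥ 1 and u ≥ 1 be integers, M ≥ 1, L ≥ 2, B ≥ 0, and let V : ℝ → ℂ be a smooth function supported in [M, 2M] with |V^{(ν)}(t)| ≤ C_ν t^{−ν} L^{Bν} for ν = 0,1,2. Then Σ_{m ≥ 1, gcd(m,q)=1} V(um) = (φ(q)/(qu)) V̂(0) + O(d(q) L^{2B}), where φ is Euler's totient, d(q) is the number of divisors of q, V̂(0) = ∫ V(t) dt, and the implied constant depends only on the C_ν. -/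
open MeasureTheory Finset Function Set

namespace Stmt11Aux

lemma ftR_zero (V : ℝ → ℂ) : ftR V 0 = ∫ t : ℝ, V t := by
  unfold ftR e
  simp

open ArithmeticFunction in
lemma sum_moebius_div (q : ℕ) (hq : 0 < q) :
    ∑ d ∈ q.divisors, (moebius d : ℂ) / d = (Nat.totient q : ℂ) / q := by
  have h1 : ∀ n : ℕ, n > 0 → ∑ i ∈ n.divisors, (Nat.totient i : ℂ) = (n : ℂ) := by
    intro n hn
    exact_mod_cast congrArg (Nat.cast : ℕ → ℂ) (Nat.sum_totient n)
  have h2 := (sum_eq_iff_sum_mul_moebius_eq (R := ℂ)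
      (f := fun i => (Nat.totient i : ℂ)) (g := fun n => (n : ℂ))).mp h1 q hq
  rw [← Nat.sum_divisorsAntidiagonal (fun a b => (moebius a : ℂ) / a), ← h2,
    Finset.sum_div]
  apply Finset.sum_congr rfl
  intro x hx
  obtain ⟨hxy, hq0⟩ := Nat.mem_divisorsAntidiagonal.mp hx
  have ha : (x.1 : ℂ) ≠ 0 := Nat.cast_ne_zero.mpr
    (Nat.left_ne_zero_of_mem_divisorsAntidiagonal hx)
  have hqc : (q : ℂ) ≠ 0 := Nat.cast_ne_zero.mpr hq.ne'
  have hb : (x.2 : ℂ) ≠ 0 := Nat.cast_ne_zero.mpr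
    (Nat.right_ne_zero_of_mem_divisorsAntidiagonal hx)
  have : (q : ℂ) = (x.1 : ℂ) * (x.2 : ℂ) := by rw [← hxy]; push_cast; ring
  rw [this]
  field_simp

open ArithmeticFunction in
lemma coprime_indicator (m q : ℕ) (hm : 0 < m) (hq : 0 < q) :
    ∑ d ∈ (Nat.gcd m q).divisors, (moebius d : ℂ)
      = if Nat.Coprime m q then 1 else 0 := by
  have h := congrArg (fun f : ArithmeticFunction ℂ => f (Nat.gcd m q))
    (coe_moebius_mul_coe_zeta (R := ℂ))
  simp only [coe_mul_zeta_apply, one_apply, intCoe_apply] at h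
  rw [h]

open ArithmeticFunction in
lemma moebius_decomp (f : ℕ → ℂ) (q K : ℕ) (hq : 0 < q) (hf0 : f 0 = 0)
    (hbig : ∀ m, K ≤ m → f m = 0) :
    ∑ m ∈ Finset.range K, (if 1 ≤ m ∧ Nat.Coprime m q then f m else 0)
      = ∑ d ∈ q.divisors, (moebius d : ℂ) * ∑ n ∈ Finset.range K, f (d * n) := by
  have step1 : ∀ m ∈ Finset.range K, (if 1 ≤ m ∧ Nat.Coprime m q then f m else 0)
      = ∑ d ∈ q.divisors, (if d ∣ m then (moebius d : ℂ) * f m else 0) := by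
    intro m _
    rcases Nat.eq_zero_or_pos m with rfl | hm
    · simp [hf0]
    · have hfilter : q.divisors.filter (· ∣ m) = (Nat.gcd m q).divisors := by
        ext d
        simp only [Finset.mem_filter, Nat.mem_divisors, Nat.dvd_gcd_iff]
        constructor
        · rintro ⟨⟨h1, h2⟩, h3⟩
          exact ⟨⟨h3, h1⟩, Nat.gcd_ne_zero_left hm.ne'⟩
        · rintro ⟨⟨h1, h2⟩, h3⟩
          exact ⟨⟨h2, hq.ne'⟩, h1⟩
      have : ∑ d ∈ q.divisors, (if d ∣ m then (moebius d : ℂ) * f m else 0)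
          = (∑ d ∈ (Nat.gcd m q).divisors, (moebius d : ℂ)) * f m := by
        rw [← hfilter, Finset.sum_filter, Finset.sum_mul]
        apply Finset.sum_congr rfl
        intro d _
        split <;> simp
      rw [this, coprime_indicator m q hm hq]
      have hm1 : 1 ≤ m := hm
      by_cases hco : Nat.Coprime m q <;> simp [hco, hm1]
  rw [Finset.sum_congr rfl step1, Finset.sum_comm]
  apply Finset.sum_congr rfl
  intro d hd
  have hd0 : 0 < d := Nat.pos_of_mem_divisors hd
  rw [Finset.mul_sum]
  rw [← Finset.sum_filter]
  have himg : ∑ n ∈ Finset.range K, (moebius d : ℂ) * f (d * n)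
      = ∑ m ∈ (Finset.range K).image (d * ·), (moebius d : ℂ) * f m := by
    rw [Finset.sum_image]
    intro a _ b _ hab
    exact Nat.eq_of_mul_eq_mul_left hd0 hab
  rw [himg]
  apply Finset.sum_subset
  · intro m hm
    simp only [Finset.mem_filter, Finset.mem_range] at hm
    simp only [Finset.mem_image, Finset.mem_range]
    obtain ⟨n, rfl⟩ := hm.2
    exact ⟨n, lt_of_le_of_lt (Nat.le_mul_of_pos_left n hd0) hm.1, rfl⟩
  · intro m hm hnm
    simp only [Finset.mem_image, Finset.mem_range] at hm
    obtain ⟨n, _, rfl⟩ := hm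
    rcases lt_or_ge (d * n) K with h | h
    · exact absurd (Finset.mem_filter.mpr ⟨Finset.mem_range.mpr h, ⟨n, rfl⟩⟩) hnm
    · rw [hbig _ h, mul_zero]

lemma step_est (g : ℝ → ℂ) (hd : Differentiable ℝ g) (hc' : Continuous (deriv g))
    (a : ℝ) :
    ‖g a - ∫ x in a..(a + 1), g x‖ ≤ ∫ x in a..(a + 1), ‖deriv g x‖ := by
  have hbound : ∀ x ∈ Set.Icc a (a + 1), ‖g a - g x‖ ≤ ∫ t in a..(a + 1), ‖deriv g t‖ := by
    intro x hx
    have h1 : ∫ t in a..x, deriv g t = g x - g a :=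
      intervalIntegral.integral_deriv_eq_sub (fun t _ => hd t)
        (hc'.intervalIntegrable a x)
    rw [norm_sub_rev, ← h1]
    calc ‖∫ t in a..x, deriv g t‖ ≤ ∫ t in a..x, ‖deriv g t‖ :=
          intervalIntegral.norm_integral_le_integral_norm hx.1
      _ ≤ ∫ t in a..(a + 1), ‖deriv g t‖ := by
          rw [← intervalIntegral.integral_add_adjacent_intervals
            ((hc'.norm).intervalIntegrable a x) ((hc'.norm).intervalIntegrable x (a + 1))]
          have h0 : 0 ≤ ∫ t in x..(a + 1), ‖deriv g t‖ :=
            intervalIntegral.integral_nonneg hx.2 (fun t _ => norm_nonneg _)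
          linarith
  have hga : (∫ _x in a..(a + 1), g a) = g a := by
    simp
  calc ‖g a - ∫ x in a..(a + 1), g x‖
      = ‖∫ x in a..(a + 1), (g a - g x)‖ := by
        rw [intervalIntegral.integral_sub intervalIntegrable_const
          (hd.continuous.intervalIntegrable a (a + 1)), hga]
    _ ≤ (∫ t in a..(a + 1), ‖deriv g t‖) * |(a + 1) - a| := by
        apply intervalIntegral.norm_integral_le_of_norm_le_const
        intro x hx
        rw [Set.uIoc_of_le (by linarith)] at hx
        exact hbound x (Set.Ioc_subset_Icc_self hx)
    _ = _ := by simp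

lemma key_est (g : ℝ → ℂ) (hg : ContDiff ℝ (⊤ : ℕ∞) g) (K : ℕ)
    (hsupp : tsupport g ⊆ Set.Ioo 0 (K : ℝ)) :
    ‖(∑ n ∈ Finset.range K, g n) - ∫ x : ℝ, g x‖ ≤ ∫ x : ℝ, ‖deriv g x‖ := by
  have hd : Differentiable ℝ g := hg.differentiable (by simp)
  have hc : Continuous g := hg.continuous
  have hc' : Continuous (deriv g) := hg.continuous_deriv (by simp)
  have hcs : HasCompactSupport g :=
    IsCompact.of_isClosed_subset isCompact_Icc (isClosed_tsupport g)
      (hsupp.trans Set.Ioo_subset_Icc_self)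
  have hcs' : HasCompactSupport (deriv g) := hcs.deriv
  have hig : Integrable g := hc.integrable_of_hasCompactSupport hcs
  have hig' : Integrable (fun x => ‖deriv g x‖) :=
    (hc'.integrable_of_hasCompactSupport hcs').norm
  have hzero : ∀ x : ℝ, x ∉ Set.Ioc 0 (K : ℝ) → g x = 0 := by
    intro x hx
    apply image_eq_zero_of_notMem_tsupport
    intro hmem
    exact hx (Set.Ioo_subset_Ioc_self (hsupp hmem))
  have hsub : tsupport (deriv g) ⊆ tsupport g :=
    closure_minimal support_deriv_subset (isClosed_tsupport g)
  have hzero' : ∀ x : ℝ, x ∉ Set.Ioc 0 (K : ℝ) → ‖deriv g x‖ = 0 := by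
    intro x hx
    have h0 : deriv g x = 0 := image_eq_zero_of_notMem_tsupport
      (fun hmem => hx (Set.Ioo_subset_Ioc_self (hsupp (hsub hmem))))
    rw [h0, norm_zero]
  have hintg : (∫ x : ℝ, g x) = ∫ x in (0:ℝ)..(K:ℝ), g x := by
    rw [intervalIntegral.integral_of_le (by positivity), ← setIntegral_eq_integral_of_forall_compl_eq_zero hzero]
  have hintg' : (∫ x : ℝ, ‖deriv g x‖) = ∫ x in (0:ℝ)..(K:ℝ), ‖deriv g x‖ := by
    rw [intervalIntegral.integral_of_le (by positivity), ← setIntegral_eq_integral_of_forall_compl_eq_zero hzero']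
  have hadj : ∑ n ∈ Finset.range K, ∫ x in ((n:ℝ))..((n:ℝ) + 1), g x
      = ∫ x in (0:ℝ)..(K:ℝ), g x := by
    have := intervalIntegral.sum_integral_adjacent_intervals
      (a := fun i : ℕ => (i : ℝ)) (f := g) (μ := volume) (n := K)
      (fun k _ => hc.intervalIntegrable _ _)
    simpa using this
  have hadj' : ∑ n ∈ Finset.range K, ∫ x in ((n:ℝ))..((n:ℝ) + 1), ‖deriv g x‖
      = ∫ x in (0:ℝ)..(K:ℝ), ‖deriv g x‖ := by
    have := intervalIntegral.sum_integral_adjacent_intervals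
      (a := fun i : ℕ => (i : ℝ)) (f := fun x => ‖deriv g x‖) (μ := volume) (n := K)
      (fun k _ => (hc'.norm).intervalIntegrable _ _)
    simpa using this
  rw [hintg, hintg', ← hadj, ← hadj', ← Finset.sum_sub_distrib]
  calc ‖∑ n ∈ Finset.range K, (g n - ∫ x in ((n:ℝ))..((n:ℝ) + 1), g x)‖
      ≤ ∑ n ∈ Finset.range K, ‖g n - ∫ x in ((n:ℝ))..((n:ℝ) + 1), g x‖ :=
        norm_sum_le _ _
    _ ≤ ∑ n ∈ Finset.range K, ∫ x in ((n:ℝ))..((n:ℝ) + 1), ‖deriv g x‖ :=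
        Finset.sum_le_sum fun n _ => step_est g hd hc' n

end Stmt11Aux


open ArithmeticFunction in
theorem stmt11 (C : ℕ → ℝ) :
    ∃ C' : ℝ, ∀ (q u : ℕ), 1 ≤ q → 1 ≤ u → ∀ (M L B : ℝ), 1 ≤ M → 2 ≤ L → 0 ≤ B →
      ∀ V : ℝ → ℂ, ContDiff ℝ (⊤ : ℕ∞) V →
        Function.support V ⊆ Set.Icc M (2 * M) →
        (∀ k : ℕ, k ≤ 2 → ∀ t : ℝ, 0 < t →
          ‖iteratedDeriv k V t‖ ≤ C k * t ^ (-(k : ℝ)) * L ^ (B * k)) →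
        ‖(∑' m : ℕ, if 1 ≤ m ∧ Nat.Coprime m q then V ((u * m : ℕ)) else 0)
            - ((Nat.totient q : ℂ) / ((q : ℂ) * (u : ℂ))) * ftR V 0‖
          ≤ C' * (q.divisors.card) * L ^ (2 * B) := by
  refine ⟨C 1, ?_⟩
  intro q u hq hu M L B hM hL hB V hV hsupp hder
  have hq0 : 0 < q := hq
  have hu0 : 0 < u := hu
  have hM0 : (0:ℝ) < M := by linarith
  have hL0 : (0:ℝ) < L := by linarith
  have hL1 : (1:ℝ) ≤ L := by linarith
  -- positivity of C 1
  have hC1 : 0 ≤ C 1 := by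
    have h := hder 1 (by norm_num) M hM0
    simp only [Nat.cast_one, mul_one] at h
    have hx : (0:ℝ) < M ^ (-1 : ℝ) := Real.rpow_pos_of_pos hM0 _
    have hy : (0:ℝ) < L ^ B := Real.rpow_pos_of_pos hL0 _
    nlinarith [norm_nonneg (iteratedDeriv 1 V M), mul_pos hx hy]
  have hLB : L ^ B ≤ L ^ (2 * B) :=
    Real.rpow_le_rpow_of_exponent_le hL1 (by linarith)
  have hLB0 : (0:ℝ) < L ^ B := Real.rpow_pos_of_pos hL0 _
  -- basic facts about V
  have hVd : Differentiable ℝ V := hV.differentiable (by simp)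
  have hVc : Continuous V := hV.continuous
  have hVc' : Continuous (deriv V) := hV.continuous_deriv (by simp)
  have htsV : tsupport V ⊆ Set.Icc M (2 * M) :=
    closure_minimal hsupp isClosed_Icc
  have hVcs : HasCompactSupport V :=
    IsCompact.of_isClosed_subset isCompact_Icc (isClosed_tsupport V) htsV
  have htsV' : tsupport (deriv V) ⊆ Set.Icc M (2 * M) :=
    (closure_minimal support_deriv_subset (isClosed_tsupport V)).trans htsV
  -- bound on the integral of the derivative
  have hderiv_int : (∫ x : ℝ, ‖deriv V x‖) ≤ C 1 * L ^ (2 * B) := by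
    have hzero : ∀ x : ℝ, x ∉ Set.Icc M (2 * M) → ‖deriv V x‖ = 0 := by
      intro x hx
      rw [image_eq_zero_of_notMem_tsupport (fun hmem => hx (htsV' hmem)), norm_zero]
    have h1 : (∫ x : ℝ, ‖deriv V x‖) = ∫ x in M..(2 * M), ‖deriv V x‖ := by
      rw [intervalIntegral.integral_of_le (by linarith), ← integral_Icc_eq_integral_Ioc,
        setIntegral_eq_integral_of_forall_compl_eq_zero hzero]
    rw [h1]
    have h2 : (∫ x in M..(2 * M), ‖deriv V x‖) ≤ ∫ _x in M..(2 * M), C 1 * M⁻¹ * L ^ B := by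
      apply intervalIntegral.integral_mono_on (by linarith)
      · exact (hVc'.norm).intervalIntegrable _ _
      · exact intervalIntegrable_const
      · intro t ht
        have ht0 : 0 < t := lt_of_lt_of_le hM0 ht.1
        have hb := hder 1 (by norm_num) t ht0
        simp only [Nat.cast_one, mul_one, iteratedDeriv_one, Real.rpow_neg_one] at hb
        have hinv : t⁻¹ ≤ M⁻¹ := inv_anti₀ hM0 ht.1
        calc ‖deriv V t‖ ≤ C 1 * t⁻¹ * L ^ B := hb
          _ ≤ C 1 * M⁻¹ * L ^ B := by
              apply mul_le_mul_of_nonneg_right _ (le_of_lt (Real.rpow_pos_of_pos hL0 _))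
              exact mul_le_mul_of_nonneg_left hinv hC1
    calc (∫ x in M..(2 * M), ‖deriv V x‖) ≤ ∫ _x in M..(2 * M), C 1 * M⁻¹ * L ^ B := h2
      _ = (2 * M - M) * (C 1 * M⁻¹ * L ^ B) := by
          rw [intervalIntegral.integral_const, smul_eq_mul]
      _ = C 1 * L ^ B := by field_simp; ring
      _ ≤ C 1 * L ^ (2 * B) := mul_le_mul_of_nonneg_left hLB hC1
  -- the cutoff K
  set K : ℕ := ⌈2 * M⌉₊ + 1 with hK_def
  have hK : 2 * M < (K : ℝ) := by
    have := Nat.le_ceil (2 * M)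
    push_cast [hK_def]
    linarith
  -- vanishing of large terms
  have hfbig : ∀ m : ℕ, K ≤ m → V (((u * m : ℕ) : ℝ)) = 0 := by
    intro m hm
    by_contra h
    have h2 := (hsupp h).2
    have : (m : ℝ) ≤ ((u * m : ℕ) : ℝ) := by
      push_cast
      nlinarith [show (1:ℝ) ≤ (u:ℝ) from by exact_mod_cast hu,
        show (0:ℝ) ≤ (m:ℝ) from Nat.cast_nonneg m]
    have hKm : (K : ℝ) ≤ (m : ℝ) := Nat.cast_le.mpr hm
    linarith
  have hV0 : V (((u * 0 : ℕ) : ℝ)) = 0 := by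
    by_contra h
    have := (hsupp h).1
    push_cast at this
    linarith
  -- reduce the tsum to a finite sum
  have hts : (∑' m : ℕ, if 1 ≤ m ∧ Nat.Coprime m q then V ((u * m : ℕ)) else 0)
      = ∑ m ∈ Finset.range K, (if 1 ≤ m ∧ Nat.Coprime m q then V ((u * m : ℕ)) else 0) := by
    apply tsum_eq_sum
    intro m hm
    have hmK : K ≤ m := le_of_not_gt (fun h => hm (Finset.mem_range.mpr h))
    rw [hfbig m hmK]
    simp
  -- Möbius decomposition
  have hdec := Stmt11Aux.moebius_decomp (fun m => V (((u * m : ℕ) : ℝ))) q K hq0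
    hV0 hfbig
  -- per-divisor estimate
  have hper : ∀ d ∈ q.divisors,
      ‖(∑ n ∈ Finset.range K, V (((u * (d * n) : ℕ) : ℝ)))
        - (((u * d : ℕ) : ℝ))⁻¹ • (∫ t : ℝ, V t)‖ ≤ C 1 * L ^ (2 * B) := by
    intro d hd
    have hd0 : 0 < d := Nat.pos_of_mem_divisors hd
    set w : ℕ := u * d with hw_def
    have hw0 : 0 < w := Nat.mul_pos hu0 hd0
    have hw1 : (1:ℝ) ≤ (w : ℝ) := by exact_mod_cast hw0
    have hwR : (0:ℝ) < (w : ℝ) := by linarith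
    set g : ℝ → ℂ := fun x => V ((w : ℝ) * x) with hg_def
    have hgsm : ContDiff ℝ (⊤ : ℕ∞) g := hV.comp (contDiff_const.mul contDiff_id)
    have hgsupp : tsupport g ⊆ Set.Ioo 0 (K : ℝ) := by
      have hsg : support g ⊆ Set.Icc (M / (w:ℝ)) (2 * M / (w:ℝ)) := by
        intro x hx
        have := hsupp hx
        constructor
        · rw [div_le_iff₀ hwR]
          calc M ≤ (w:ℝ) * x := this.1
            _ = x * (w:ℝ) := mul_comm _ _
        · rw [le_div_iff₀ hwR]
          calc x * (w:ℝ) = (w:ℝ) * x := mul_comm _ _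
            _ ≤ 2 * M := this.2
      refine (closure_minimal hsg isClosed_Icc).trans ?_
      intro x hx
      constructor
      · have := hx.1
        have : (0:ℝ) < M / (w:ℝ) := div_pos hM0 hwR
        linarith [hx.1]
      · have h2 : 2 * M / (w:ℝ) ≤ 2 * M := by
          apply div_le_self (by linarith) hw1
        linarith [hx.2]
    have hkey := Stmt11Aux.key_est g hgsm K hgsupp
    -- rewrite the sum
    have hsum_eq : (∑ n ∈ Finset.range K, V (((u * (d * n) : ℕ) : ℝ)))
        = ∑ n ∈ Finset.range K, g (n : ℝ) := by
      apply Finset.sum_congr rfl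
      intro n _
      simp only [hg_def]
      congr 1
      push_cast [hw_def]
      ring
    -- rewrite the integral
    have hint_eq : (∫ x : ℝ, g x) = (((w : ℕ) : ℝ))⁻¹ • (∫ t : ℝ, V t) := by
      rw [hg_def]
      rw [MeasureTheory.Measure.integral_comp_mul_left V (w : ℝ)]
      congr 1
      rw [abs_of_nonneg (by positivity)]
    -- derivative of g
    have hgderiv : ∀ x : ℝ, deriv g x = (w : ℝ) • deriv V ((w : ℝ) * x) := by
      intro x
      have h1 : HasDerivAt (fun y : ℝ => (w:ℝ) * y) ((w:ℝ)) x := by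
        simpa using (hasDerivAt_id x).const_mul ((w:ℝ))
      have h2 : HasDerivAt V (deriv V ((w:ℝ) * x)) ((w:ℝ) * x) := (hVd _).hasDerivAt
      exact (HasDerivAt.scomp x h2 h1).deriv
    have hderiv_eq : (∫ x : ℝ, ‖deriv g x‖) = ∫ t : ℝ, ‖deriv V t‖ := by
      have : (∫ x : ℝ, ‖deriv g x‖) = ∫ x : ℝ, (w:ℝ) * ‖deriv V ((w:ℝ) * x)‖ := by
        congr 1
        funext x
        rw [hgderiv x, norm_smul, Real.norm_eq_abs, abs_of_nonneg (by positivity)]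
      rw [this, MeasureTheory.integral_const_mul,
        MeasureTheory.Measure.integral_comp_mul_left (fun t => ‖deriv V t‖) (w : ℝ),
        abs_of_nonneg (by positivity), smul_eq_mul]
      field_simp
    rw [hsum_eq, ← hint_eq]
    calc ‖(∑ n ∈ Finset.range K, g (n:ℝ)) - ∫ x : ℝ, g x‖
        ≤ ∫ x : ℝ, ‖deriv g x‖ := hkey
      _ = ∫ t : ℝ, ‖deriv V t‖ := hderiv_eq
      _ ≤ C 1 * L ^ (2 * B) := hderiv_int
  -- main term decomposition
  have hqC : ((q:ℕ) : ℂ) ≠ 0 := Nat.cast_ne_zero.mpr hq0.ne'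
  have huC : ((u:ℕ) : ℂ) ≠ 0 := Nat.cast_ne_zero.mpr hu0.ne'
  have hmain : ((Nat.totient q : ℂ) / ((q : ℂ) * (u : ℂ))) * ftR V 0
      = ∑ d ∈ q.divisors, (moebius d : ℂ) *
          ((((u * d : ℕ) : ℝ))⁻¹ • (∫ t : ℝ, V t)) := by
    rw [Stmt11Aux.ftR_zero]
    have hterm : ∀ d ∈ q.divisors, (moebius d : ℂ) *
        ((((u * d : ℕ) : ℝ))⁻¹ • (∫ t : ℝ, V t))
        = ((moebius d : ℂ) / d) * (((u:ℂ))⁻¹ * (∫ t : ℝ, V t)) := by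
      intro d hd
      have hd0 : 0 < d := Nat.pos_of_mem_divisors hd
      have hdC : ((d:ℕ) : ℂ) ≠ 0 := Nat.cast_ne_zero.mpr hd0.ne'
      have hsm : ((((u * d : ℕ) : ℝ))⁻¹ • (∫ t : ℝ, V t))
          = (((u : ℂ)) * ((d : ℂ)))⁻¹ * (∫ t : ℝ, V t) := by
        rw [Complex.real_smul]
        congr 1
        push_cast
        ring
      rw [hsm, mul_inv, div_eq_mul_inv]
      ring
    rw [Finset.sum_congr rfl hterm, ← Finset.sum_mul, Stmt11Aux.sum_moebius_div q hq0]
    rw [div_eq_mul_inv, div_eq_mul_inv, mul_inv]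
    ring
  rw [hts, hdec, hmain, ← Finset.sum_sub_distrib]
  calc ‖∑ d ∈ q.divisors, ((moebius d : ℂ) * ∑ n ∈ Finset.range K, V (((u * (d * n) : ℕ) : ℝ))
          - (moebius d : ℂ) * ((((u * d : ℕ) : ℝ))⁻¹ • (∫ t : ℝ, V t)))‖
      ≤ ∑ d ∈ q.divisors, ‖(moebius d : ℂ) * ∑ n ∈ Finset.range K, V (((u * (d * n) : ℕ) : ℝ))
          - (moebius d : ℂ) * ((((u * d : ℕ) : ℝ))⁻¹ • (∫ t : ℝ, V t))‖ := norm_sum_le _ _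
    _ ≤ ∑ _d ∈ q.divisors, C 1 * L ^ (2 * B) := by
        apply Finset.sum_le_sum
        intro d hd
        rw [← mul_sub, norm_mul]
        have hmu : ‖((moebius d : ℤ) : ℂ)‖ ≤ 1 := by
          rw [show ((moebius d : ℤ) : ℂ) = (((moebius d : ℤ) : ℝ) : ℂ) by push_cast; rfl,
            Complex.norm_real, Real.norm_eq_abs]
          rw [show |((moebius d : ℤ) : ℝ)| = ((|moebius d| : ℤ) : ℝ) by push_cast; rfl]
          exact_mod_cast abs_moebius_le_one
        calc ‖((moebius d : ℤ) : ℂ)‖ * ‖(∑ n ∈ Finset.range K, V (((u * (d * n) : ℕ) : ℝ)))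
              - (((u * d : ℕ) : ℝ))⁻¹ • (∫ t : ℝ, V t)‖
            ≤ 1 * (C 1 * L ^ (2 * B)) := by
              apply mul_le_mul hmu (hper d hd) (norm_nonneg _) zero_le_one
          _ = C 1 * L ^ (2 * B) := one_mul _
    _ = (q.divisors.card : ℝ) * (C 1 * L ^ (2 * B)) := by
        rw [Finset.sum_const, nsmul_eq_mul]
    _ = C 1 * (q.divisors.card : ℝ) * L ^ (2 * B) := by ring
end

section
/- For every positive integer a, the triple sum over ordered factorizations a = δ₁ δ₂ δ₃ (positive integers) of φ(δ₂ δ₃) φ(δ₃) / (δ₂ δ₃) equals a. -/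
/-! Substituting `d = δ₂ δ₃` and `e = δ₃`, the sum becomes `∑_{d ∣ a} (φ d / d) ∑_{e ∣ d} φ e`;
Gauss's identity `∑_{e ∣ d} φ e = d` turns it into `∑_{d ∣ a} φ d`, which is `a` by the same
identity. -/

open Finset

theorem sum_triple_factorizations_eq_sum_divisors_sum_divisors {M : Type*} [AddCommMonoid M]
    (a : ℕ) (f : ℕ × ℕ × ℕ → M) :
    ∑ t ∈ (a.divisors ×ˢ a.divisors ×ˢ a.divisors).filter
        (fun t : ℕ × ℕ × ℕ => t.1 * t.2.1 * t.2.2 = a), f t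
      = ∑ d ∈ a.divisors, ∑ e ∈ d.divisors, f (a / d, d / e, e) := by
  rw [sum_sigma']
  symm
  refine sum_nbij' (fun p => (a / p.1, p.1 / p.2, p.2)) (fun t => ⟨t.2.1 * t.2.2, t.2.2⟩)
    ?_ ?_ ?_ ?_ fun _ _ => rfl
  · rintro ⟨d, e⟩ hp
    simp only [mem_sigma, Nat.mem_divisors] at hp
    obtain ⟨⟨hd, ha⟩, he, -⟩ := hp
    simp only [mem_filter, mem_product, Nat.mem_divisors]
    exact ⟨⟨⟨Nat.div_dvd_of_dvd hd, ha⟩, ⟨(Nat.div_dvd_of_dvd he).trans hd, ha⟩, he.trans hd, ha⟩,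
      by rw [mul_assoc, Nat.div_mul_cancel he, Nat.div_mul_cancel hd]⟩
  · rintro ⟨x, y, z⟩ ht
    simp only [mem_filter, mem_product, Nat.mem_divisors] at ht
    obtain ⟨⟨⟨-, ha⟩, -, -⟩, rfl⟩ := ht
    simp only [mem_sigma, Nat.mem_divisors]
    exact ⟨⟨⟨x, by ring⟩, ha⟩, Dvd.intro_left y rfl, right_ne_zero_of_mul (mul_assoc x y z ▸ ha)⟩
  · rintro ⟨d, e⟩ hp
    simp only [mem_sigma, Nat.mem_divisors] at hp
    simp [Nat.div_mul_cancel hp.2.1]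
  · rintro ⟨x, y, z⟩ ht
    simp only [mem_filter, mem_product, Nat.mem_divisors] at ht
    obtain ⟨⟨⟨-, ha⟩, -, -⟩, rfl⟩ := ht
    rw [mul_assoc] at ha
    have hz : z ≠ 0 := right_ne_zero_of_mul (right_ne_zero_of_mul ha)
    simp [mul_assoc, right_ne_zero_of_mul ha, hz]

theorem Nat.sum_divisors_totient_mul_totient_div {K : Type*} [Field K] [CharZero K] (d : ℕ) :
    ∑ e ∈ d.divisors, (d.totient * e.totient : K) / d = d.totient := by
  rw [← sum_div, ← mul_sum, ← Nat.cast_sum, Nat.sum_totient]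
  rcases eq_or_ne d 0 with rfl | hd
  · simp
  · exact mul_div_cancel_right₀ _ (Nat.cast_ne_zero.mpr hd)

theorem stmt13_general (a : ℕ) :
    ∑ t ∈ (a.divisors ×ˢ a.divisors ×ˢ a.divisors).filter
        (fun t : ℕ × ℕ × ℕ => t.1 * t.2.1 * t.2.2 = a),
      ((Nat.totient (t.2.1 * t.2.2) : ℚ) * (Nat.totient t.2.2 : ℚ))
        / ((t.2.1 : ℚ) * (t.2.2 : ℚ))
      = a := by
  rw [sum_triple_factorizations_eq_sum_divisors_sum_divisors]
  calc _ = ∑ d ∈ a.divisors, ∑ e ∈ d.divisors, (d.totient * e.totient : ℚ) / d :=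
        sum_congr rfl fun d _ => sum_congr rfl fun e he => by
          have he := Nat.dvd_of_mem_divisors he
          rw [Nat.div_mul_cancel he, ← Nat.cast_mul (d / e), Nat.div_mul_cancel he]
    _ = ∑ d ∈ a.divisors, (d.totient : ℚ) :=
        sum_congr rfl fun d _ => Nat.sum_divisors_totient_mul_totient_div d
    _ = a := by exact_mod_cast Nat.sum_totient a

theorem stmt13 (a : ℕ) (ha : 0 < a) :
    ∑ t ∈ (a.divisors ×ˢ a.divisors ×ˢ a.divisors).filter
        (fun t : ℕ × ℕ × ℕ => t.1 * t.2.1 * t.2.2 = a),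
      ((Nat.totient (t.2.1 * t.2.2) : ℚ) * (Nat.totient t.2.2 : ℚ))
        / ((t.2.1 : ℚ) * (t.2.2 : ℚ))
      = a :=
  stmt13_general a
end
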